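/- The output of PSC is a 2-approximate Pareto front: let T be a trajectory with n vertices and Δ ≥ 0. Suppose S is a set of Δ-clusters such that for every node interval [i,k] of a balanced binary tree over [1,n] and every prefix or suffix P of T[i,k], S contains a maximum-cardinality Δ-cluster with centre P. Then for every Δ-cluster (P, 𝒫) there exists (Q, 𝒬) ∈ S with |𝒬| ≥ |𝒫| and |P| ≤ 2|Q|, where |P| denotes the number of vertices of the centre. -/

import Mathlib

/-!
Given a Δ-cluster with centre `T[a, b]`, descend the tree to the lowest node whose interval
contains `[a, b]`. There `[a, b]` straddles the split point `m`, so one of `T[a, m]` and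
`T[m + 1, b]` has at least half of the vertices of the centre; it is a suffix of the left
child's interval or a prefix of the right child's, so `S` holds a maximum cluster with that
centre. It remains to see that shrinking the centre to a subtrajectory does not shrink the
cluster: an optimal walk from the centre to a member passes through every column, and cutting
it there cuts the member to a subtrajectory within `Δ` of the shrunken centre. The cut members
stay pairwise disjoint, hence distinct.
-/

/-- One step of a discrete walk: each coordinate stays or decreases by one. -/
def Step (p q : ℕ × ℕ) : Prop :=
  (q.1 = p.1 ∨ q.1 + 1 = p.1) ∧ (q.2 = p.2 ∨ q.2 + 1 = p.2)

/-- A discrete walk from `(x, y)` down to `(1, 1)`. -/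
def IsWalk (F : List (ℕ × ℕ)) (x y : ℕ) : Prop :=
  F.head? = some (x, y) ∧ F.getLast? = some (1, 1) ∧ List.Chain' Step F

/-- The cost of a discrete walk: maximum pointwise distance along the walk. -/
noncomputable def walkCost (P Q : ℕ → ℝ × ℝ) (F : List (ℕ × ℕ)) : ℝ :=
  (F.map fun p => dist (P p.1) (Q p.2)).foldr max 0

/-- The discrete Fréchet distance between the sequences `P 1, …, P x` and `Q 1, …, Q y`. -/
noncomputable def dF (P : ℕ → ℝ × ℝ) (x : ℕ) (Q : ℕ → ℝ × ℝ) (y : ℕ) : ℝ :=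
  sInf {c | ∃ F, IsWalk F x y ∧ walkCost P Q F = c}

/-- The subtrajectory of `T` starting at index `a`, reindexed from `1`. -/
def subtraj (T : ℕ → ℝ × ℝ) (a : ℕ) : ℕ → ℝ × ℝ := fun i => T (a + i - 1)

/-- `(T[a,b], Ps)` is a `Δ`-cluster: members of `Ps` are subtrajectories (given by their
index intervals) at discrete Fréchet distance at most `Δ` from the centre `T[a,b]`,
the index intervals of distinct members are pairwise disjoint, and the centre is a member. -/
def IsCluster (T : ℕ → ℝ × ℝ) (Δ : ℝ) (a b : ℕ) (Ps : Finset (ℕ × ℕ)) : Prop :=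
  (a, b) ∈ Ps ∧
  (∀ p ∈ Ps, 1 ≤ p.1 ∧ p.1 ≤ p.2 ∧
    dF (subtraj T a) (b - a + 1) (subtraj T p.1) (p.2 - p.1 + 1) ≤ Δ) ∧
  ∀ p ∈ Ps, ∀ q ∈ Ps, p ≠ q → Disjoint (Finset.Icc p.1 p.2) (Finset.Icc q.1 q.2)

/-- Binary trees whose leaves are consecutive integers. -/
inductive BTree : Type
  | leaf (i : ℕ) : BTree
  | node (l r : BTree) : BTree

/-- Left endpoint of the interval of a tree. -/
def BTree.lo : BTree → ℕ
  | .leaf i => i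
  | .node l _ => l.lo

/-- Right endpoint of the interval of a tree. -/
def BTree.hi : BTree → ℕ
  | .leaf i => i
  | .node _ r => r.hi

/-- Well-formedness: at every node the right child's interval starts right after
the left child's interval ends. -/
def BTree.WF : BTree → Prop
  | .leaf _ => True
  | .node l r => l.WF ∧ r.WF ∧ r.lo = l.hi + 1

/-- The set of all nodes (subtrees) of a tree. -/
def BTree.nodes : BTree → Set BTree
  | .leaf i => {BTree.leaf i}
  | .node l r => insert (BTree.node l r) (l.nodes ∪ r.nodes)

lemma foldr_max_le_iff {l : List ℝ} {c : ℝ} : l.foldr max 0 ≤ c ↔ 0 ≤ c ∧ ∀ r ∈ l, r ≤ c := by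
  induction l with
  | nil => simp
  | cons a l ih => simp only [List.foldr_cons, max_le_iff, ih, List.forall_mem_cons]; tauto

lemma foldr_max_eq_zero_or_mem (l : List ℝ) : l.foldr max 0 = 0 ∨ l.foldr max 0 ∈ l := by
  induction l with
  | nil => simp
  | cons a l ih =>
    rcases max_choice a (l.foldr max 0) with h | h
    · simp [h]
    · rw [List.foldr_cons, h]
      exact ih.imp_right (List.mem_cons_of_mem a)

lemma walkCost_le_iff {P Q : ℕ → ℝ × ℝ} {F : List (ℕ × ℕ)} {c : ℝ} :
    walkCost P Q F ≤ c ↔ 0 ≤ c ∧ ∀ p ∈ F, dist (P p.1) (Q p.2) ≤ c := by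
  simp only [walkCost, foldr_max_le_iff, List.forall_mem_map]

lemma walkCost_nonneg (P Q : ℕ → ℝ × ℝ) (F : List (ℕ × ℕ)) : 0 ≤ walkCost P Q F :=
  (walkCost_le_iff.1 le_rfl).1

lemma walkCost_le_walkCost {P Q P' Q' : ℕ → ℝ × ℝ} {F F' : List (ℕ × ℕ)}
    (h : ∀ p ∈ F', ∃ q ∈ F, dist (P' p.1) (Q' p.2) ≤ dist (P q.1) (Q q.2)) :
    walkCost P' Q' F' ≤ walkCost P Q F := by
  refine walkCost_le_iff.2 ⟨walkCost_nonneg P Q F, fun p hp => ?_⟩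
  obtain ⟨q, hq, hpq⟩ := h p hp
  exact hpq.trans ((walkCost_le_iff.1 le_rfl).2 q hq)

lemma Step.le {p q : ℕ × ℕ} (h : Step p q) : q ≤ p := by
  obtain ⟨h1, h2⟩ := h
  exact ⟨by omega, by omega⟩

lemma IsWalk.pairwise {F : List (ℕ × ℕ)} {x y : ℕ} (h : IsWalk F x y) :
    F.Pairwise (· ≥ ·) :=
  (List.IsChain.imp (fun _ _ hs => Step.le hs) h.2.2).pairwise

lemma IsWalk.mem_Icc {F : List (ℕ × ℕ)} {x y : ℕ} (h : IsWalk F x y) {p : ℕ × ℕ}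
    (hp : p ∈ F) : p ∈ Set.Icc (1, 1) (x, y) := by
  obtain ⟨G, rfl⟩ := List.head?_eq_some_iff.1 h.1
  obtain ⟨H, hH⟩ := List.getLast?_eq_some_iff.1 h.2.1
  have hpw := h.pairwise
  constructor
  · rw [hH] at hp hpw
    rcases List.mem_append.1 hp with hp | hp
    · exact hpw.rel_of_mem_append hp List.mem_cons_self
    · exact (List.mem_singleton.1 hp).ge
  · rcases List.mem_cons.1 hp with rfl | hp
    · exact le_rfl
    · exact List.rel_of_pairwise_cons hpw hp

lemma exists_eq_append_cons_of_isChain_step {t : ℕ} :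
    ∀ {F : List (ℕ × ℕ)}, F.IsChain Step → (∀ p ∈ F.head?, t ≤ p.1) → (∃ p ∈ F, p.1 ≤ t) →
      ∃ G j H, F = G ++ (t, j) :: H ∧ ∀ p ∈ G, t < p.1
  | [], _, _, ⟨_, hp, _⟩ => absurd hp List.not_mem_nil
  | p :: F, hF, hhead, ⟨q, hq, hqt⟩ => by
    have htp : t ≤ p.1 := hhead p rfl
    rcases htp.eq_or_lt with htp | htp
    · exact ⟨[], p.2, F, by rw [htp]; rfl, by simp⟩
    obtain ⟨hstep, hF⟩ := List.isChain_cons.1 hF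
    have hhead' : ∀ r ∈ F.head?, t ≤ r.1 := fun r hr => by
      obtain ⟨h1, -⟩ := hstep r hr; omega
    have hq' : q ∈ F := (List.mem_cons.1 hq).resolve_left (by rintro rfl; omega)
    obtain ⟨G, j, H, rfl, hG⟩ := exists_eq_append_cons_of_isChain_step hF hhead' ⟨q, hq', hqt⟩
    exact ⟨p :: G, j, H, rfl, by simpa [htp] using hG⟩

lemma IsWalk.exists_eq_append_cons {F : List (ℕ × ℕ)} {x y t : ℕ} (h : IsWalk F x y)
    (ht : 1 ≤ t) (htx : t ≤ x) : ∃ G j H, F = G ++ (t, j) :: H ∧ ∀ p ∈ G, t < p.1 :=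
  exists_eq_append_cons_of_isChain_step h.2.2 (by simpa [h.1] using htx)
    ⟨(1, 1), List.mem_of_getLast? h.2.1, ht⟩

lemma IsWalk.exists_isWalk_suffix {F : List (ℕ × ℕ)} {x y t : ℕ} (h : IsWalk F x y)
    (ht : 1 ≤ t) (htx : t ≤ x) :
    ∃ j, 1 ≤ j ∧ j ≤ y ∧ ∃ F', IsWalk F' t j ∧ ∀ p ∈ F', p ∈ F := by
  obtain ⟨G, j, H, rfl, -⟩ := h.exists_eq_append_cons ht htx
  obtain ⟨⟨-, hj1⟩, ⟨-, hjy⟩⟩ := h.mem_Icc (List.mem_append_right G List.mem_cons_self)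
  refine ⟨j, hj1, hjy, (t, j) :: H, ⟨rfl, ?_, h.2.2.suffix (List.suffix_append G _)⟩,
    fun p hp => List.mem_append_right G hp⟩
  simpa [List.getLast?_append] using h.2.1

lemma IsWalk.exists_isWalk_shift {F : List (ℕ × ℕ)} {x y s : ℕ} (h : IsWalk F x y)
    (hs : s < x) :
    ∃ k < y, ∃ F', IsWalk F' (x - s) (y - k) ∧ ∀ p ∈ F', (s + p.1, k + p.2) ∈ F := by
  obtain ⟨G, j, H, hF, hG⟩ := h.exists_eq_append_cons (t := s + 1) (by omega) hs
  set G' := G ++ [(s + 1, j)]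
  have hG'F : G' ++ H = F := by simp [G', hF]
  have hj : (s + 1, j) ∈ F := hF ▸ List.mem_append_right G List.mem_cons_self
  obtain ⟨⟨-, hj1⟩, ⟨-, hjy⟩⟩ := h.mem_Icc hj
  have hG'ge : ∀ p ∈ G', s + 1 ≤ p.1 ∧ j ≤ p.2 := by
    intro p hp
    rcases List.mem_append.1 hp with hp | hp
    · have hpw := h.pairwise
      rw [hF] at hpw
      exact ⟨(hG p hp).le, (hpw.rel_of_mem_append hp List.mem_cons_self).2⟩
    · rw [List.mem_singleton.1 hp]; exact ⟨le_rfl, le_rfl⟩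
  let φ : ℕ × ℕ → ℕ × ℕ := fun p => (p.1 - s, p.2 - (j - 1))
  refine ⟨j - 1, by omega, G'.map φ, ⟨?_, ?_, ?_⟩, ?_⟩
  · obtain ⟨g, G'', hg⟩ := List.exists_cons_of_ne_nil (show G' ≠ [] by simp [G'])
    have : g = (x, y) := by simpa [← hG'F, hg] using h.1
    simp only [hg, List.map_cons, List.head?_cons, this, φ]
  · have hφ : φ (s + 1, j) = (1, 1) := by simp only [φ, Prod.ext_iff]; omega
    simp [G', hφ]
  · refine (List.isChain_map φ).2 ((h.2.2.prefix ⟨H, hG'F⟩).imp_of_mem_imp ?_)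
    intro p q hp hq ⟨h1, h2⟩
    have := hG'ge p hp; have := hG'ge q hq
    constructor <;> simp only [φ] <;> omega
  · simp only [List.mem_map]
    rintro _ ⟨p, hp, rfl⟩
    have := hG'ge p hp
    convert hG'F ▸ List.mem_append_left H hp using 1
    simp only [φ, Prod.ext_iff]; omega

lemma isWalk_staircase {x y : ℕ} (hx : 1 ≤ x) (hy : 1 ≤ y) :
    IsWalk ((List.range (max x y)).map fun k => (max 1 (x - k), max 1 (y - k))) x y := by
  obtain ⟨M, hM⟩ : ∃ M, max x y = M + 1 := ⟨max x y - 1, by omega⟩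
  refine ⟨?_, ?_, ?_⟩
  · rw [hM, List.range_succ_eq_map]
    simp only [List.map_cons, List.head?_cons, Option.some.injEq, Prod.ext_iff]
    omega
  · rw [hM, List.range_succ, List.map_append, List.getLast?_append_of_ne_nil _ (by simp)]
    simp only [List.map_cons, List.map_nil, List.getLast?_singleton, Option.some_inj,
      Prod.ext_iff]
    omega
  · show List.IsChain Step _
    rw [List.isChain_map, hM]
    exact (List.isChain_range_succ _ _).2 fun m _ => ⟨by omega, by omega⟩

lemma dF_le_walkCost {P Q : ℕ → ℝ × ℝ} {x y : ℕ} {F : List (ℕ × ℕ)} (h : IsWalk F x y) :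
    dF P x Q y ≤ walkCost P Q F :=
  csInf_le ⟨0, by rintro _ ⟨F', -, rfl⟩; exact walkCost_nonneg P Q F'⟩ ⟨F, h, rfl⟩

lemma dF_nonneg (P : ℕ → ℝ × ℝ) (x : ℕ) (Q : ℕ → ℝ × ℝ) (y : ℕ) : 0 ≤ dF P x Q y :=
  Real.sInf_nonneg (by rintro _ ⟨F, -, rfl⟩; exact walkCost_nonneg P Q F)

/-- There are infinitely many walks (steps may stand still), but their costs are `0` or
values `dist (P i) (Q j)` with `(i, j)` in a box. -/
lemma exists_walkCost_eq_dF (P Q : ℕ → ℝ × ℝ) {x y : ℕ} (hx : 1 ≤ x) (hy : 1 ≤ y) :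
    ∃ F, IsWalk F x y ∧ walkCost P Q F = dF P x Q y := by
  set costs := {c | ∃ F, IsWalk F x y ∧ walkCost P Q F = c}
  have hfin : costs.Finite := by
    refine ((Set.finite_Iic (x, y)).image fun p => dist (P p.1) (Q p.2)).insert 0
      |>.subset ?_
    rintro _ ⟨F, hF, rfl⟩
    rcases foldr_max_eq_zero_or_mem (F.map fun p => dist (P p.1) (Q p.2)) with h0 | hmem
    · exact Or.inl h0
    · obtain ⟨p, hp, hpc⟩ := List.mem_map.1 hmem
      exact Or.inr ⟨p, (hF.mem_Icc hp).2, hpc⟩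
  exact Set.Nonempty.csInf_mem (s := costs) ⟨_, _, isWalk_staircase hx hy, rfl⟩ hfin

lemma dF_self (P : ℕ → ℝ × ℝ) {x : ℕ} (hx : 1 ≤ x) : dF P x P x = 0 := by
  refine le_antisymm ((dF_le_walkCost (isWalk_staircase hx hx)).trans ?_) (dF_nonneg P x P x)
  exact walkCost_le_iff.2 ⟨le_rfl, by simp⟩

lemma exists_dF_prefix_le (P Q : ℕ → ℝ × ℝ) {x y t : ℕ} (ht : 1 ≤ t) (htx : t ≤ x)
    (hy : 1 ≤ y) : ∃ j, 1 ≤ j ∧ j ≤ y ∧ dF P t Q j ≤ dF P x Q y := by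
  obtain ⟨F, hF, hcost⟩ := exists_walkCost_eq_dF P Q (ht.trans htx) hy
  obtain ⟨j, hj1, hjy, F', hF', hsub⟩ := hF.exists_isWalk_suffix ht htx
  refine ⟨j, hj1, hjy, ?_⟩
  calc dF P t Q j ≤ walkCost P Q F' := dF_le_walkCost hF'
    _ ≤ walkCost P Q F := walkCost_le_walkCost fun p hp => ⟨p, hsub p hp, le_rfl⟩
    _ = dF P x Q y := hcost

lemma exists_dF_shift_le (P Q : ℕ → ℝ × ℝ) {x y s : ℕ} (hs : s < x) (hy : 1 ≤ y) :
    ∃ k < y, dF (fun i => P (s + i)) (x - s) (fun i => Q (k + i)) (y - k) ≤ dF P x Q y := by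
  obtain ⟨F, hF, hcost⟩ := exists_walkCost_eq_dF P Q (by omega : 1 ≤ x) hy
  obtain ⟨k, hky, F', hF', hsub⟩ := hF.exists_isWalk_shift hs
  refine ⟨k, hky, ?_⟩
  calc dF (fun i => P (s + i)) (x - s) (fun i => Q (k + i)) (y - k)
      ≤ walkCost (fun i => P (s + i)) (fun i => Q (k + i)) F' := dF_le_walkCost hF'
    _ ≤ walkCost P Q F := walkCost_le_walkCost fun p hp => ⟨_, hsub p hp, le_rfl⟩
    _ = dF P x Q y := hcost

lemma subtraj_add (T : ℕ → ℝ × ℝ) (a s : ℕ) :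
    subtraj T (a + s) = fun i => subtraj T a (s + i) := by
  funext i; simp only [subtraj, add_assoc]

lemma IsCluster.one_le_and_le {T : ℕ → ℝ × ℝ} {Δ : ℝ} {a b : ℕ} {Ps : Finset (ℕ × ℕ)}
    (hC : IsCluster T Δ a b Ps) : 1 ≤ a ∧ a ≤ b :=
  ⟨(hC.2.1 _ hC.1).1, (hC.2.1 _ hC.1).2.1⟩

lemma IsCluster.image_update {T : ℕ → ℝ × ℝ} {Δ : ℝ} {a b a' b' : ℕ} {Ps : Finset (ℕ × ℕ)}
    (hC : IsCluster T Δ a b Ps) (ha : a ≤ a') (hab' : a' ≤ b') (hb : b' ≤ b)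
    (g : ℕ × ℕ → ℕ × ℕ) (hg : ∀ p ∈ Ps, p.1 ≤ (g p).1 ∧ (g p).1 ≤ (g p).2 ∧ (g p).2 ≤ p.2)
    (hgΔ : ∀ p ∈ Ps,
      dF (subtraj T a') (b' - a' + 1) (subtraj T (g p).1) ((g p).2 - (g p).1 + 1) ≤ Δ) :
    IsCluster T Δ a' b' (Ps.image (Function.update g (a, b) (a', b'))) ∧
      (Ps.image (Function.update g (a, b) (a', b'))).card = Ps.card := by
  classical
  obtain ⟨hctr, hmem, hdisj⟩ := hC
  set f := Function.update g (a, b) (a', b')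
  have hΔ : 0 ≤ Δ := (dF_nonneg _ _ _ _).trans (hmem _ hctr).2.2
  have hf : ∀ p ∈ Ps, p.1 ≤ (f p).1 ∧ (f p).1 ≤ (f p).2 ∧ (f p).2 ≤ p.2 ∧
      dF (subtraj T a') (b' - a' + 1) (subtraj T (f p).1) ((f p).2 - (f p).1 + 1) ≤ Δ := by
    intro p hp
    by_cases hpc : p = (a, b)
    · subst hpc
      simp only [f, Function.update_self, dF_self _ (Nat.le_add_left 1 _)]
      exact ⟨ha, hab', hb, hΔ⟩
    · simp only [f, Function.update_of_ne hpc]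
      exact ⟨(hg p hp).1, (hg p hp).2.1, (hg p hp).2.2, hgΔ p hp⟩
  have hsub : ∀ p ∈ Ps, Finset.Icc (f p).1 (f p).2 ⊆ Finset.Icc p.1 p.2 := fun p hp =>
    Finset.Icc_subset_Icc (hf p hp).1 (hf p hp).2.2.1
  have hfdisj : ∀ p ∈ Ps, ∀ q ∈ Ps, p ≠ q →
      Disjoint (Finset.Icc (f p).1 (f p).2) (Finset.Icc (f q).1 (f q).2) :=
    fun p hp q hq hpq => (hdisj p hp q hq hpq).mono (hsub p hp) (hsub q hq)
  have hinj : Set.InjOn f Ps := by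
    intro p hp q hq hpq
    by_contra hne
    have hself := Finset.left_mem_Icc.2 (hf p hp).2.1
    exact Finset.disjoint_left.1 (hfdisj p hp q hq hne) hself (hpq ▸ hself)
  refine ⟨⟨Finset.mem_image.2 ⟨(a, b), hctr, Function.update_self _ _ _⟩, ?_, ?_⟩,
    Finset.card_image_of_injOn hinj⟩
  · simp only [Finset.mem_image]
    rintro _ ⟨p, hp, rfl⟩
    exact ⟨(hmem p hp).1.trans (hf p hp).1, (hf p hp).2.1, (hf p hp).2.2.2⟩
  · simp only [Finset.mem_image]
    rintro _ ⟨p, hp, rfl⟩ _ ⟨q, hq, rfl⟩ hpq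
    exact hfdisj p hp q hq (ne_of_apply_ne f hpq)

lemma IsCluster.exists_prefix {T : ℕ → ℝ × ℝ} {Δ : ℝ} {a b b' : ℕ} {Ps : Finset (ℕ × ℕ)}
    (hC : IsCluster T Δ a b Ps) (hab' : a ≤ b') (hb : b' ≤ b) :
    ∃ Qs, IsCluster T Δ a b' Qs ∧ Qs.card = Ps.card := by
  have hprefix : ∀ p ∈ Ps, ∃ j, 1 ≤ j ∧ j ≤ p.2 - p.1 + 1 ∧
      dF (subtraj T a) (b' - a + 1) (subtraj T p.1) j ≤ Δ := by
    intro p hp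
    obtain ⟨-, hp, hpΔ⟩ := hC.2.1 p hp
    obtain ⟨j, hj1, hjp, hj⟩ := exists_dF_prefix_le (subtraj T a) (subtraj T p.1)
      (x := b - a + 1) (t := b' - a + 1) (by omega) (by omega) (by omega : 1 ≤ p.2 - p.1 + 1)
    exact ⟨j, hj1, hjp, hj.trans hpΔ⟩
  choose! j hj1 hjp hjΔ using hprefix
  refine ⟨_, hC.image_update le_rfl hab' hb (fun p => (p.1, p.1 + j p - 1)) ?_ ?_⟩
  · intro p hp
    have := hj1 p hp; have := hjp p hp; have := (hC.2.1 p hp).2.1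
    dsimp only; omega
  · intro p hp
    convert hjΔ p hp using 2
    have := hj1 p hp
    dsimp only; omega

lemma IsCluster.exists_suffix {T : ℕ → ℝ × ℝ} {Δ : ℝ} {a a' b : ℕ} {Ps : Finset (ℕ × ℕ)}
    (hC : IsCluster T Δ a b Ps) (ha : a ≤ a') (hab' : a' ≤ b) :
    ∃ Qs, IsCluster T Δ a' b Qs ∧ Qs.card = Ps.card := by
  obtain ⟨s, rfl⟩ := Nat.exists_eq_add_of_le ha
  have hsuffix : ∀ p ∈ Ps, ∃ k < p.2 - p.1 + 1,
      dF (subtraj T (a + s)) (b - (a + s) + 1) (subtraj T (p.1 + k)) (p.2 - (p.1 + k) + 1)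
        ≤ Δ := by
    intro p hp
    obtain ⟨-, hp, hpΔ⟩ := hC.2.1 p hp
    obtain ⟨k, hk, hkΔ⟩ := exists_dF_shift_le (subtraj T a) (subtraj T p.1)
      (x := b - a + 1) (s := s) (by omega) (by omega : 1 ≤ p.2 - p.1 + 1)
    refine ⟨k, hk, ?_⟩
    rw [subtraj_add, subtraj_add, show b - (a + s) + 1 = b - a + 1 - s by omega,
      show p.2 - (p.1 + k) + 1 = p.2 - p.1 + 1 - k by omega]
    exact hkΔ.trans hpΔ
  choose! k hk hkΔ using hsuffix
  refine ⟨_, hC.image_update ha hab' le_rfl (fun p => (p.1 + k p, p.2)) ?_ hkΔ⟩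
  intro p hp
  have := hk p hp; have := (hC.2.1 p hp).2.1
  dsimp only; omega

lemma IsCluster.exists_of_subinterval {T : ℕ → ℝ × ℝ} {Δ : ℝ} {a b a' b' : ℕ}
    {Ps : Finset (ℕ × ℕ)} (hC : IsCluster T Δ a b Ps) (ha : a ≤ a') (hab' : a' ≤ b')
    (hb : b' ≤ b) : ∃ Qs, IsCluster T Δ a' b' Qs ∧ Ps.card ≤ Qs.card := by
  obtain ⟨Rs, hR, hRcard⟩ := hC.exists_prefix (ha.trans hab') hb
  obtain ⟨Qs, hQ, hQcard⟩ := hR.exists_suffix ha hab'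
  exact ⟨Qs, hQ, (hQcard.trans hRcard).ge⟩

lemma BTree.mem_nodes_self : ∀ v : BTree, v ∈ v.nodes
  | .leaf _ => rfl
  | .node _ _ => Set.mem_insert _ _

lemma BTree.exists_mem_nodes_half {a b : ℕ} :
    ∀ B : BTree, B.WF → B.lo ≤ a → a ≤ b → b ≤ B.hi → ∃ v ∈ B.nodes,
      (v.lo ≤ a ∧ a ≤ v.hi ∧ v.hi ≤ b ∧ b - a + 1 ≤ 2 * (v.hi - a + 1)) ∨
      (a ≤ v.lo ∧ v.lo ≤ b ∧ b ≤ v.hi ∧ b - a + 1 ≤ 2 * (b - v.lo + 1))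
  | .leaf i, _, hlo, hab, hhi => by
    simp only [BTree.lo, BTree.hi] at hlo hhi
    exact ⟨.leaf i, rfl, Or.inl ⟨hlo, by simp only [BTree.hi]; omega⟩⟩
  | .node l r, ⟨hl, hr, hlr⟩, hlo, hab, hhi => by
    have hsub : ∀ v ∈ l.nodes ∪ r.nodes, v ∈ (BTree.node l r).nodes := fun v hv => Or.inr hv
    simp only [BTree.lo, BTree.hi] at hlo hhi
    by_cases hbl : b ≤ l.hi
    · obtain ⟨v, hv, h⟩ := l.exists_mem_nodes_half hl hlo hab hbl
      exact ⟨v, hsub v (Or.inl hv), h⟩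
    by_cases har : r.lo ≤ a
    · obtain ⟨v, hv, h⟩ := r.exists_mem_nodes_half hr har hab hhi
      exact ⟨v, hsub v (Or.inr hv), h⟩
    by_cases hhalf : b - a + 1 ≤ 2 * (l.hi - a + 1)
    · exact ⟨l, hsub l (Or.inl l.mem_nodes_self), Or.inl ⟨hlo, by omega, by omega, hhalf⟩⟩
    · exact ⟨r, hsub r (Or.inr r.mem_nodes_self), Or.inr ⟨by omega, by omega, hhi, by omega⟩⟩

theorem psc_two_approx_general (T : ℕ → ℝ × ℝ) (n : ℕ) (Δ : ℝ)
    (B : BTree) (hWF : B.WF) (hlo : B.lo = 1) (hhi : B.hi = n)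
    (S : Set ((ℕ × ℕ) × Finset (ℕ × ℕ)))
    (hS : ∀ v ∈ B.nodes, ∀ c, v.lo ≤ c → c ≤ v.hi →
      (∃ Qs, ((v.lo, c), Qs) ∈ S ∧ IsCluster T Δ v.lo c Qs ∧
        ∀ Qs' : Finset (ℕ × ℕ), IsCluster T Δ v.lo c Qs' → Qs'.card ≤ Qs.card) ∧
      (∃ Qs, ((c, v.hi), Qs) ∈ S ∧ IsCluster T Δ c v.hi Qs ∧
        ∀ Qs' : Finset (ℕ × ℕ), IsCluster T Δ c v.hi Qs' → Qs'.card ≤ Qs.card)) :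
    ∀ a b (Ps : Finset (ℕ × ℕ)), IsCluster T Δ a b Ps → b ≤ n →
      ∃ q Qs, (q, Qs) ∈ S ∧ Ps.card ≤ Qs.card ∧ b - a + 1 ≤ 2 * (q.2 - q.1 + 1) := by
  intro a b Ps hC hbn
  obtain ⟨ha, hab⟩ := hC.one_le_and_le
  obtain ⟨v, hv, ⟨hva, hav, hvb, hlen⟩ | ⟨hav, hvb, hbv, hlen⟩⟩ :=
    B.exists_mem_nodes_half hWF (hlo ▸ ha) hab (hhi ▸ hbn)
  · obtain ⟨Qs, hQS, -, hQmax⟩ := (hS v hv a hva hav).2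
    obtain ⟨Rs, hR, hRcard⟩ := hC.exists_of_subinterval le_rfl hav hvb
    exact ⟨(a, v.hi), Qs, hQS, hRcard.trans (hQmax Rs hR), hlen⟩
  · obtain ⟨Qs, hQS, -, hQmax⟩ := (hS v hv b hvb hbv).1
    obtain ⟨Rs, hR, hRcard⟩ := hC.exists_of_subinterval hav hvb le_rfl
    exact ⟨(v.lo, b), Qs, hQS, hRcard.trans (hQmax Rs hR), hlen⟩

/-- the output of PSC is a 2-approximate Pareto front: if S contains, for
every prefix and every suffix of every node interval of a balanced binary tree over
[1,n], a maximum-cardinality Δ-cluster with that centre, then for every Δ-cluster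
(P, Ps) there is (Q, Qs) ∈ S with |Qs| ≥ |Ps| and |P| ≤ 2|Q|. -/
theorem psc_two_approx (T : ℕ → ℝ × ℝ) (n : ℕ) (Δ : ℝ) (hΔ : 0 ≤ Δ)
    (B : BTree) (hWF : B.WF) (hlo : B.lo = 1) (hhi : B.hi = n)
    (S : Set ((ℕ × ℕ) × Finset (ℕ × ℕ)))
    (hS : ∀ v ∈ B.nodes, ∀ c, v.lo ≤ c → c ≤ v.hi →
      (∃ Qs, ((v.lo, c), Qs) ∈ S ∧ IsCluster T Δ v.lo c Qs ∧
        ∀ Qs' : Finset (ℕ × ℕ), IsCluster T Δ v.lo c Qs' → Qs'.card ≤ Qs.card) ∧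
      (∃ Qs, ((c, v.hi), Qs) ∈ S ∧ IsCluster T Δ c v.hi Qs ∧
        ∀ Qs' : Finset (ℕ × ℕ), IsCluster T Δ c v.hi Qs' → Qs'.card ≤ Qs.card)) :
    ∀ a b (Ps : Finset (ℕ × ℕ)), IsCluster T Δ a b Ps → b ≤ n →
      ∃ q Qs, (q, Qs) ∈ S ∧ Ps.card ≤ Qs.card ∧ b - a + 1 ≤ 2 * (q.2 - q.1 + 1) :=
  psc_two_approx_general T n Δ B hWF hlo hhi S hS
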